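/- arXiv:1609.01222 — 2 statements merged into one kernel-verified Lean document; each statement's English description precedes it below -/
import Mathlib

section
/- If f ∈ Homeo₀(T²) has the shadowing property, then its rotation set is upper-stable in Homeo₀(T²): there exists δ₀ > 0 such that for any lift f̃ of f, every g ∈ Homeo₀(T²) and every lift g̃ of g with sup_{x∈ℝ²} ‖f̃(x) − g̃(x)‖ ≤ δ₀ satisfy ρ(g̃) ⊆ ρ(f̃). -/
noncomputable section

open Metric Set Filter Topology MeasureTheory Pointwise

/-- The plane `ℝ²` with the Euclidean metric. -/
abbrev R2 : Type := EuclideanSpace ℝ (Fin 2)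

/-- The integer lattice `ℤ² ⊂ ℝ²`. -/
def intLattice : AddSubgroup R2 where
  carrier := {v : R2 | ∀ i, ∃ n : ℤ, v i = (n : ℝ)}
  add_mem' := by
    intro a b ha hb i
    obtain ⟨m, hm⟩ := ha i
    obtain ⟨n, hn⟩ := hb i
    exact ⟨m + n, by push_cast; rw [← hm, ← hn]; rfl⟩
  zero_mem' := fun i => ⟨0, by simp⟩
  neg_mem' := by
    intro a ha i
    obtain ⟨m, hm⟩ := ha i
    exact ⟨-m, by push_cast; rw [← hm]; rfl⟩

/-- The torus `T² = ℝ²/ℤ²`, with the quotient (Euclidean) metric. -/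
abbrev T2 : Type := R2 ⧸ intLattice

/-- The covering projection `π : ℝ² → T²`. -/
def pr : R2 → T2 := QuotientAddGroup.mk

instance : MeasurableSpace T2 := borel T2
instance : BorelSpace T2 := ⟨rfl⟩

/-- A fundamental domain `[0,1)²` for the lattice action. -/
def fundDomain : Set R2 := {x : R2 | ∀ i, x i ∈ Set.Ico (0 : ℝ) 1}

/-- Lebesgue (Haar) probability measure on the torus `T²`. -/
def lebT2 : Measure T2 := Measure.map pr (volume.restrict fundDomain)

/-- `F : ℝ² → ℝ²` is a lift of `f : T² → T²` if `π ∘ F = f ∘ π` and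
`F (x + w) = F x + w` for every lattice vector `w ∈ ℤ²`. -/
structure IsLift (f : T2 ≃ₜ T2) (F : R2 ≃ₜ R2) : Prop where
  proj : ∀ x : R2, pr (F x) = f (pr x)
  equivariant : ∀ x : R2, ∀ w ∈ intLattice, F (x + w) = F x + w

/-- `Homeo₀(T²)`: homeomorphisms of the torus isotopic to the identity,
characterized as those admitting a lift commuting with integer translations. -/
def Homeo0 : Set (T2 ≃ₜ T2) := {f | ∃ F : R2 ≃ₜ R2, IsLift f F}

/-- `Homeo_{0,λ}(T²)`: elements of `Homeo₀(T²)` preserving Lebesgue measure. -/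
def Homeo0Leb : Set (T2 ≃ₜ T2) :=
  {f | f ∈ Homeo0 ∧ MeasurePreserving f lebT2 lebT2}

/-- The uniform `C⁰` distance `d_{C⁰}(f,g) = sup_x d(f(x), g(x))` on torus maps. -/
def dC0 (f g : T2 ≃ₜ T2) : ℝ := ⨆ x : T2, dist (f x) (g x)

/-- The uniform distance `sup_{x ∈ ℝ²} ‖F(x) − G(x)‖` between maps of the plane. -/
def supDist (F G : R2 → R2) : ℝ := ⨆ x : R2, dist (F x) (G x)

/-- The rotation set `ρ(F̃)` of a lift: all limits `(F̃^{n_k}(z_k) − z_k)/n_k`. -/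
def rotSet (F : R2 ≃ₜ R2) : Set R2 :=
  {v | ∃ (z : ℕ → R2) (n : ℕ → ℕ), Tendsto n atTop atTop ∧
    Tendsto (fun k => (n k : ℝ)⁻¹ • ((⇑F)^[n k] (z k) - z k)) atTop (𝓝 v)}

/-- The rotation set of `f`, with fixed lift `F`, is `δ`-upper-stable in `H`. -/
def UpperStable (H : Set (T2 ≃ₜ T2)) (F : R2 ≃ₜ R2) (δ : ℝ) : Prop :=
  ∀ g ∈ H, ∀ G : R2 ≃ₜ R2, IsLift g G → supDist (⇑F) (⇑G) < δ →
    rotSet G ⊆ rotSet F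

/-- The rotation set of `f`, with fixed lift `F`, is `δ`-stable in `H`. -/
def StableRS (H : Set (T2 ≃ₜ T2)) (F : R2 ≃ₜ R2) (δ : ℝ) : Prop :=
  ∀ g ∈ H, ∀ G : R2 ≃ₜ R2, IsLift g G → supDist (⇑F) (⇑G) < δ →
    rotSet G = rotSet F

/-- `f` has a stable rotation set in `H`. -/
def HasStableRotSet (H : Set (T2 ≃ₜ T2)) (f : T2 ≃ₜ T2) : Prop :=
  ∃ F : R2 ≃ₜ R2, IsLift f F ∧ ∃ δ > 0, StableRS H F δ

/-- `S` is open in `H` for the uniform `C⁰` topology. -/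
def OpenIn (H S : Set (T2 ≃ₜ T2)) : Prop :=
  ∀ f ∈ S ∩ H, ∃ δ > 0, ∀ g ∈ H, dC0 f g < δ → g ∈ S

/-- `S` is dense in `H` for the uniform `C⁰` topology. -/
def DenseIn (H S : Set (T2 ≃ₜ T2)) : Prop :=
  ∀ f ∈ H, ∀ ε > 0, ∃ g ∈ S ∩ H, dC0 f g < ε

/-- `(x_i)_{0 ≤ i ≤ n}` is a finite `ε`-pseudo-orbit of `F`. -/
def IsPseudoOrbitUpTo (F : R2 → R2) (ε : ℝ) (x : ℕ → R2) (n : ℕ) : Prop :=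
  ∀ i < n, dist (F (x i)) (x (i + 1)) < ε

/-- `(x_i)_{i ∈ ℕ}` is an infinite `ε`-pseudo-orbit of `F`. -/
def IsPseudoOrbit (F : R2 → R2) (ε : ℝ) (x : ℕ → R2) : Prop :=
  ∀ i : ℕ, dist (F (x i)) (x (i + 1)) < ε

/-- The `ε`-pseudo-rotation set `ρ_ε(F̃)`. -/
def pseudoRotSet (F : R2 → R2) (ε : ℝ) : Set R2 :=
  {v | ∃ (n : ℕ → ℕ) (x : ℕ → ℕ → R2), Tendsto n atTop atTop ∧
    (∀ k, IsPseudoOrbitUpTo F ε (x k) (n k)) ∧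
    Tendsto (fun k => (n k : ℝ)⁻¹ • (x k (n k) - x k 0)) atTop (𝓝 v)}

/-- The oscillation `osc(f) = sup_{x,y} ‖(F(x) − x) − (F(y) − y)‖` of a lift. -/
def osc (F : R2 → R2) : ℝ := ⨆ p : R2 × R2, ‖(F p.1 - p.1) - (F p.2 - p.2)‖

/-- `f` has the shadowing property. -/
def Shadowing (f : T2 ≃ₜ T2) : Prop :=
  ∀ ε > 0, ∃ δ > 0, ∀ x : ℕ → T2, (∀ i, dist (f (x i)) (x (i + 1)) < δ) →
    ∃ z : T2, ∀ i, dist ((⇑f)^[i] z) (x i) < ε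

/-- `v ∈ ℚ² ⊂ ℝ²`. -/
def IsRationalPoint (v : R2) : Prop := ∀ i, ∃ q : ℚ, v i = (q : ℝ)

/-! A `G̃`-orbit is a `δ₀`-pseudo-orbit of `F̃`, so its projection is a pseudo-orbit of `f`, which
shadowing traces within `ε` by a true orbit of `f`. Lifting that orbit, the correcting lattice
vector cannot jump from one step to the next, since a jump would be a nonzero lattice vector of
norm below `1`; so a single lift of the shadowing orbit stays within `ε` of the `G̃`-orbit, and the
two orbits have the same asymptotic displacement. -/

lemma dist_pr_le (a b : R2) : dist (pr a) (pr b) ≤ dist a b := by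
  rw [dist_eq_norm, dist_eq_norm]
  exact QuotientAddGroup.norm_mk_le_norm

lemma lipschitzWith_pr : LipschitzWith 1 pr :=
  LipschitzWith.of_dist_le_mul fun a b => by simpa using dist_pr_le a b

lemma eq_zero_of_mem_intLattice_of_norm_lt_one {w : R2} (hw : w ∈ intLattice) (h : ‖w‖ < 1) :
    w = 0 := by
  ext i
  obtain ⟨n, hn⟩ := hw i
  have hn1 : |(n : ℝ)| < 1 := by
    rw [← hn, ← Real.norm_eq_abs]
    exact (PiLp.norm_apply_le w i).trans_lt h
  simp [hn, Int.abs_lt_one_iff.1 (by exact_mod_cast hn1)]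

lemma exists_pr_eq_dist_lt_of_dist_pr_lt {a b : R2} {r : ℝ} (h : dist (pr a) (pr b) < r) :
    ∃ a', pr a' = pr a ∧ dist a' b < r := by
  rw [dist_eq_norm] at h
  obtain ⟨m, hm, hmr⟩ := QuotientAddGroup.norm_lt_iff.1 h
  refine ⟨m + b, ?_, by rwa [dist_eq_norm, add_sub_cancel_right]⟩
  change (m : T2) + pr b = pr a
  rw [hm, sub_add_cancel]

lemma dist_lt_of_dist_pr_lt {a b : R2} {ε : ℝ} (hpr : dist (pr a) (pr b) < ε)
    (hab : dist a b < 1 - ε) : dist a b < ε := by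
  obtain ⟨a', ha', ha'b⟩ := exists_pr_eq_dist_lt_of_dist_pr_lt hpr
  have hmem : a' - a ∈ intLattice := by
    simpa [neg_add_eq_sub] using QuotientAddGroup.eq.1 ha'.symm
  have hnorm : ‖a' - a‖ < 1 := by
    rw [← dist_eq_norm]
    linarith [dist_triangle_right a' a b]
  rwa [sub_eq_zero.1 (eq_zero_of_mem_intLattice_of_norm_lt_one hmem hnorm)] at ha'b

instance : CompactSpace T2 := by
  refine ⟨?_⟩
  have hsurj : pr '' (WithLp.toLp 2 '' univ.pi fun _ : Fin 2 => Icc (0 : ℝ) 1) = univ := by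
    refine eq_univ_of_forall fun q => ?_
    obtain ⟨a, rfl⟩ := QuotientAddGroup.mk_surjective q
    refine ⟨_, ⟨fun i => Int.fract (a i),
      fun i _ => ⟨Int.fract_nonneg _, (Int.fract_lt_one _).le⟩, rfl⟩, ?_⟩
    exact QuotientAddGroup.eq.2 fun i => ⟨⌊a i⌋, by
      simp only [PiLp.add_apply, PiLp.neg_apply, Int.fract]; ring⟩
  rw [← hsurj]
  exact ((isCompact_univ_pi fun _ => isCompact_Icc).image (PiLp.continuous_toLp 2 _)).image
    lipschitzWith_pr.continuous

namespace IsLift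

variable {f : T2 ≃ₜ T2} {F : R2 ≃ₜ R2}

lemma pr_iterate (hF : IsLift f F) (x : R2) (n : ℕ) : pr (F^[n] x) = f^[n] (pr x) :=
  Function.Semiconj.iterate_right hF.proj n x

lemma exists_continuous_displacement (hF : IsLift f F) :
    ∃ ψ : T2 → R2, Continuous ψ ∧ ∀ x, F x - x = ψ (pr x) := by
  have hresp : ∀ a b, QuotientAddGroup.leftRel intLattice a b → F a - a = F b - b := by
    intro a b hab
    have hF_b : F b = F a + (-a + b) := by
      rw [← hF.equivariant a _ (QuotientAddGroup.leftRel_apply.1 hab), add_neg_cancel_left]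
    rw [hF_b]
    abel
  refine ⟨fun q => Quotient.liftOn' q (fun x => F x - x) hresp, ?_, fun x => rfl⟩
  exact (QuotientAddGroup.isQuotientMap_mk intLattice).continuous_iff.2
    (F.continuous.sub continuous_id)

lemma uniformContinuous (hF : IsLift f F) : UniformContinuous F := by
  obtain ⟨ψ, hψ, hFψ⟩ := hF.exists_continuous_displacement
  have hF_eq : ⇑F = fun x => x + ψ (pr x) := funext fun x => by rw [← hFψ, add_sub_cancel]
  rw [hF_eq]
  exact uniformContinuous_id.add
    ((CompactSpace.uniformContinuous_of_continuous hψ).comp lipschitzWith_pr.uniformContinuous)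

lemma dist_le_supDist {g : T2 ≃ₜ T2} {G : R2 ≃ₜ R2} (hF : IsLift f F) (hG : IsLift g G)
    (x : R2) : dist (F x) (G x) ≤ supDist F G := by
  obtain ⟨ψ, hψ, hFψ⟩ := hF.exists_continuous_displacement
  obtain ⟨φ, hφ, hGφ⟩ := hG.exists_continuous_displacement
  have hcomp : (fun x => dist (F x) (G x)) = (fun q => dist (ψ q) (φ q)) ∘ pr :=
    funext fun x => by rw [Function.comp_apply, ← hFψ, ← hGφ, dist_sub_right]
  refine le_ciSup (f := fun x => dist (F x) (G x)) ?_ x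
  rw [hcomp]
  exact (isCompact_range (hψ.dist hφ)).bddAbove.mono (range_comp_subset_range _ _)

/-- The difference of two lifts is continuous with values in the discrete set `ℤ²`. -/
lemma exists_eq_add {F' : R2 ≃ₜ R2} (hF : IsLift f F) (hF' : IsLift f F') :
    ∃ c, ∀ x, F x = F' x + c := by
  set D : R2 → R2 := fun x => F x - F' x
  have hmem : ∀ x, D x ∈ intLattice := fun x => by
    simpa [D, neg_add_eq_sub] using QuotientAddGroup.eq.1 ((hF'.proj x).trans (hF.proj x).symm)
  have hD : IsLocallyConstant D := by
    refine (IsLocallyConstant.iff_eventually_eq D).2 fun x => ?_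
    filter_upwards [Metric.tendsto_nhds.1 ((F.continuous.sub F'.continuous).tendsto x) 1 one_pos]
      with y hy
    exact sub_eq_zero.1 (eq_zero_of_mem_intLattice_of_norm_lt_one
      (intLattice.sub_mem (hmem y) (hmem x)) (by rwa [← dist_eq_norm]))
  exact ⟨D 0, fun x => sub_eq_iff_eq_add'.1 (hD.apply_eq_of_preconnectedSpace x 0)⟩

lemma dist_apply_eq {F' : R2 ≃ₜ R2} (hF : IsLift f F) (hF' : IsLift f F') (a b : R2) :
    dist (F a) (F b) = dist (F' a) (F' b) := by
  obtain ⟨c, hc⟩ := hF.exists_eq_add hF'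
  rw [hc, hc, dist_add_right]

lemma exists_orbit_near_of_dist_pr_lt (hF : IsLift f F) {ε : ℝ} (hε : ε ≤ 1 / 3)
    (hmod : ∀ {a b : R2}, dist a b < ε → dist (F a) (F b) < 1 / 3)
    {x : ℕ → R2} (hx : ∀ i, dist (F (x i)) (x (i + 1)) < 1 / 3) {z : T2}
    (hz : ∀ i, dist (f^[i] z) (pr (x i)) < ε) : ∃ w, ∀ i, dist (F^[i] w) (x i) < ε := by
  obtain ⟨w₀, rfl⟩ : ∃ w₀, pr w₀ = z := QuotientAddGroup.mk_surjective z
  obtain ⟨w, hw, hw0⟩ := exists_pr_eq_dist_lt_of_dist_pr_lt (hz 0)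
  refine ⟨w, fun i => ?_⟩
  induction i with
  | zero => exact hw0
  | succ i ih =>
    refine dist_lt_of_dist_pr_lt (by rw [hF.pr_iterate, hw]; exact hz (i + 1)) ?_
    calc dist (F^[i + 1] w) (x (i + 1))
        ≤ dist (F (F^[i] w)) (F (x i)) + dist (F (x i)) (x (i + 1)) := by
          rw [Function.iterate_succ_apply']
          exact dist_triangle _ _ _
      _ < 1 / 3 + 1 / 3 := add_lt_add (hmod ih) (hx i)
      _ ≤ 1 - ε := by linarith

lemma exists_orbit_near_of_shadowing (hF : IsLift f F) {G : R2 ≃ₜ R2} {ε δ : ℝ}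
    (hε : ε ≤ 1 / 3) (hmod : ∀ {a b : R2}, dist a b < ε → dist (F a) (F b) < 1 / 3)
    (hshad : ∀ x : ℕ → T2, (∀ i, dist (f (x i)) (x (i + 1)) < δ) →
      ∃ z : T2, ∀ i, dist (f^[i] z) (x i) < ε)
    (hFG : ∀ x, dist (F x) (G x) < min δ (1 / 3)) (z : R2) :
    ∃ w, ∀ i, dist (F^[i] w) (G^[i] z) < ε := by
  have hpseudo : ∀ i, dist (F (G^[i] z)) (G^[i + 1] z) < min δ (1 / 3) := fun i => by
    rw [Function.iterate_succ_apply']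
    exact hFG _
  obtain ⟨zT, hzT⟩ := hshad (fun i => pr (G^[i] z)) fun i => by
    rw [← hF.proj]
    exact (dist_pr_le _ _).trans_lt ((hpseudo i).trans_le (min_le_left _ _))
  exact hF.exists_orbit_near_of_dist_pr_lt hε hmod
    (fun i => (hpseudo i).trans_le (min_le_right _ _)) hzT

end IsLift

lemma rotSet_subset_of_orbits_near {F G : R2 ≃ₜ R2} {C : ℝ}
    (h : ∀ z, ∃ y, ∀ n, dist (F^[n] y) (G^[n] z) ≤ C) : rotSet G ⊆ rotSet F := by
  choose y hy using h
  rintro v ⟨z, n, hn, hv⟩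
  refine ⟨fun k => y (z k), n, hn, hv.congr_dist
    (squeeze_zero (g := fun k => (n k : ℝ)⁻¹ * (C + C)) (fun _ => dist_nonneg) (fun k => ?_) ?_)⟩
  · rw [dist_smul₀, Real.norm_of_nonneg (by positivity)]
    refine mul_le_mul_of_nonneg_left ?_ (by positivity)
    rw [dist_comm]
    exact dist_sub_sub_le_of_le (hy (z k) (n k)) (hy (z k) 0)
  · simpa using (tendsto_inv_atTop_zero.comp (tendsto_natCast_atTop_atTop.comp hn)).mul_const
      (C + C)

/-- If `f ∈ Homeo₀(T²)` has the shadowing property, then its rotation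
set is upper-stable in `Homeo₀(T²)`: there is `δ₀ > 0` such that for any lift `F` of
`f`, every `g ∈ Homeo₀(T²)` and lift `G` of `g` with `sup_x ‖F(x) − G(x)‖ ≤ δ₀`
satisfy `ρ(G) ⊆ ρ(F)`. -/
theorem upper_stable_of_shadowing (f : T2 ≃ₜ T2) (hf : f ∈ Homeo0)
    (hsh : Shadowing f) :
    ∃ δ₀ > 0, ∀ F : R2 ≃ₜ R2, IsLift f F → ∀ g ∈ Homeo0, ∀ G : R2 ≃ₜ R2,
      IsLift g G → supDist (⇑F) (⇑G) ≤ δ₀ → rotSet G ⊆ rotSet F := by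
  obtain ⟨F₀, hF₀⟩ := hf
  obtain ⟨η, hη, hmod⟩ :=
    Metric.uniformContinuous_iff.1 hF₀.uniformContinuous (1 / 3) (by norm_num)
  obtain ⟨δ, hδ, hshad⟩ := hsh (min η (1 / 3)) (by positivity)
  refine ⟨min δ (1 / 3) / 2, by positivity, fun F hF g _ G hG hFG => ?_⟩
  refine rotSet_subset_of_orbits_near (C := min η (1 / 3)) fun z => ?_
  have hFG' : ∀ x, dist (F x) (G x) < min δ (1 / 3) := fun x =>
    (hF.dist_le_supDist hG x).trans_lt (hFG.trans_lt (half_lt_self (by positivity)))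
  obtain ⟨w, hw⟩ := hF.exists_orbit_near_of_shadowing (min_le_right _ _)
    (fun hab => (hF.dist_apply_eq hF₀ _ _).trans_lt (hmod (hab.trans_le (min_le_left _ _))))
    hshad hFG' z
  exact ⟨w, fun n => (hw n).le⟩
end
end

section
/- Let f ∈ Homeo₀(T²) have an ε-upper-stable rotation set (in Homeo₀(T²)) with 0 < ε < 1, let f̃ be a lift of f, and let (x̃_i)_{i∈ℕ} be an (ε/2)-pseudo-orbit of f̃ in ℝ². If i < j are indices and there exists w ∈ ℤ² with ‖x̃_j − x̃_i − w‖ < ε/2, then w/(j−i) ∈ ρ(f̃); in particular x̃_j − x̃_i = (j−i)v + η for some v ∈ ρ(f̃) and some η ∈ ℝ² with ‖η‖ < ε/2. -/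
noncomputable section

open Metric Set Filter Topology MeasureTheory Pointwise

/-! By upper stability it suffices to find a lift `G` with `sup ‖F - G‖ < ε` and a point `z` with
`G^(j-i) z = z + w`, for then `w / (j - i) ∈ ρ(G) ⊆ ρ(F)`. We take `G = h ∘ F` for an equivariant
homeomorphism `h` moving finitely many points: the closed pseudo-orbit `x_i, …, x_{j-1}, x_i + w`
is first perturbed to points `z_t` that are pairwise distinct modulo `ℤ²`, and `h` sends each
`F z_t` to `z_{t+1}`, moving no point by more than the pseudo-orbit's jumps, which are `< ε`.

Such an `h` is a composition of maps `x ↦ x + ∑ φ_k(x) v_k`, where the `φ_k` are tent functions on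
the torus with disjoint supports around the current positions of the points; the perturbation of
the identity is then a contraction, so these maps are homeomorphisms. The points travel along
straight segments through generic midpoints, which keeps them distinct modulo `ℤ²` throughout. -/

section Equivariant

variable {E : Type*} [AddCommGroup E] {L : AddSubgroup E}

variable (L) in
def IsTranslationEquivariant (G : E → E) : Prop := ∀ x, ∀ w ∈ L, G (x + w) = G x + w

lemma IsTranslationEquivariant.comp {G H : E → E} (hG : IsTranslationEquivariant L G)
    (hH : IsTranslationEquivariant L H) : IsTranslationEquivariant L (G ∘ H) := fun x w hw => by
  rw [Function.comp_apply, hH x w hw, hG _ w hw, Function.comp_apply]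

lemma IsTranslationEquivariant.iterate {G : E → E} (hG : IsTranslationEquivariant L G) (m : ℕ) :
    IsTranslationEquivariant L G^[m] := by
  induction m with
  | zero => exact fun x w _ => rfl
  | succ m ih => rw [Function.iterate_succ]; exact ih.comp hG

lemma IsTranslationEquivariant.iterate_mul_eq_add_nsmul {G : E → E}
    (hG : IsTranslationEquivariant L G) {n : ℕ} {z w : E} (hw : w ∈ L) (hz : G^[n] z = z + w)
    (m : ℕ) : G^[m * n] z = z + m • w := by
  induction m with
  | zero => simp
  | succ m ih =>
    rw [Nat.succ_mul, Function.iterate_add_apply, hz, hG.iterate _ z w hw, ih, succ_nsmul]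
    abel

lemma IsTranslationEquivariant.sub_notMem {G : E → E} (hG : IsTranslationEquivariant L G)
    (hinj : Function.Injective G) {x y : E} (h : x - y ∉ L) : G x - G y ∉ L := by
  intro hmem
  have : x = y + (G x - G y) := hinj (by rw [hG y _ hmem]; abel)
  exact h (by rwa [this, add_sub_cancel_left])

lemma IsTranslationEquivariant.symm [TopologicalSpace E] {G : E ≃ₜ E}
    (hG : IsTranslationEquivariant L G) : IsTranslationEquivariant L G.symm := fun x w hw =>
  G.injective (by rw [hG _ w hw, G.apply_symm_apply, G.apply_symm_apply])

lemma IsTranslationEquivariant.leftRel {G : E → E} (hG : IsTranslationEquivariant L G) {x y : E}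
    (h : QuotientAddGroup.leftRel L x y) : QuotientAddGroup.leftRel L (G x) (G y) := by
  rw [QuotientAddGroup.leftRel_apply] at h ⊢
  rwa [show y = x + (-x + y) by abel, hG x _ h, neg_add_cancel_left]

lemma IsTranslationEquivariant.exists_homeomorph_quotient [TopologicalSpace E] {G : E ≃ₜ E}
    (hG : IsTranslationEquivariant L G) : ∃ g : E ⧸ L ≃ₜ E ⧸ L, ∀ x : E, g x = G x :=
  ⟨{ toFun := Quotient.map' G fun _ _ => hG.leftRel
     invFun := Quotient.map' G.symm fun _ _ => hG.symm.leftRel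
     left_inv := fun q => Quotient.inductionOn' q fun x =>
       congrArg Quotient.mk'' (G.symm_apply_apply x)
     right_inv := fun q => Quotient.inductionOn' q fun x =>
       congrArg Quotient.mk'' (G.apply_symm_apply x)
     continuous_toFun := G.continuous.quotient_map' _
     continuous_invFun := G.symm.continuous.quotient_map' _ }, fun _ => rfl⟩

end Equivariant

lemma LipschitzWith.exists_homeomorph_add {E : Type*} [NormedAddCommGroup E] [NormedSpace ℝ E]
    [CompleteSpace E] {V : E → E} {K : NNReal} (hV : LipschitzWith K V) (hK : K < 1) :
    ∃ u : E ≃ₜ E, ∀ x, u x = x + V x := by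
  have happrox : ApproximatesLinearOn (fun x => x + V x)
      (ContinuousLinearEquiv.refl ℝ E : E →L[ℝ] E) univ K := fun x _ y _ => by
    simpa [add_sub_add_comm, dist_eq_norm] using hV.dist_le_mul x y
  refine ⟨happrox.toHomeomorph _ ?_, fun _ => rfl⟩
  rcases subsingleton_or_nontrivial E with hE | hE
  · exact .inl hE
  · right
    simpa using hK

section Bump

variable {E : Type*} [NormedAddCommGroup E] (L : AddSubgroup E)

def periodicBump (r : ℝ) (c x : E) : ℝ := max (1 - dist (x : E ⧸ L) c / r) 0

variable {L} {r : ℝ}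

lemma periodicBump_nonneg (c x : E) : 0 ≤ periodicBump L r c x := le_max_right _ _

lemma periodicBump_le_one (hr : 0 ≤ r) (c x : E) : periodicBump L r c x ≤ 1 :=
  max_le (by linarith [div_nonneg (dist_nonneg (x := (x : E ⧸ L)) (y := c)) hr]) zero_le_one

lemma periodicBump_self (c : E) : periodicBump L r c c = 1 := by
  simp [periodicBump]

lemma periodicBump_add_mem (c x : E) {w : E} (hw : w ∈ L) :
    periodicBump L r c (x + w) = periodicBump L r c x := by
  simp only [periodicBump, QuotientAddGroup.mk_add_of_mem x hw]

lemma dist_lt_of_periodicBump_ne_zero (hr : 0 < r) {c x : E} (h : periodicBump L r c x ≠ 0) :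
    dist (x : E ⧸ L) c < r := by
  by_contra! hle
  exact h (max_eq_right (by linarith [(one_le_div hr).2 hle]))

lemma QuotientAddGroup.dist_mk_eq_infDist (x y : E) : dist (x : E ⧸ L) y = infDist (x - y) L := by
  rw [dist_eq_norm, ← QuotientAddGroup.mk_sub, QuotientAddGroup.norm_mk]

lemma QuotientAddGroup.dist_mk_le (x y : E) : dist (x : E ⧸ L) y ≤ dist x y := by
  rw [dist_eq_norm, dist_eq_norm, ← QuotientAddGroup.mk_sub]
  exact QuotientAddGroup.norm_mk_le_norm

lemma abs_periodicBump_sub_le (hr : 0 < r) (c x y : E) :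
    |periodicBump L r c x - periodicBump L r c y| ≤ dist x y / r :=
  calc |periodicBump L r c x - periodicBump L r c y|
      _ ≤ |(1 - dist (x : E ⧸ L) c / r) - (1 - dist (y : E ⧸ L) c / r)| :=
        abs_max_sub_max_le_abs _ _ _
      _ = |dist (x : E ⧸ L) c - dist (y : E ⧸ L) c| / r := by
        rw [abs_sub_comm, ← abs_of_pos hr, ← abs_div, abs_of_pos hr]
        ring_nf
      _ ≤ dist x y / r := by
        gcongr; exact (abs_dist_sub_le _ _ _).trans (QuotientAddGroup.dist_mk_le x y)

variable {ι : Type*} {p : ι → E}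

lemma periodicBump_eq_zero_of_ne (hr : 0 < r)
    (hsep : Pairwise fun k l => 2 * r ≤ dist (p k : E ⧸ L) (p l)) {k l : ι} (hkl : k ≠ l)
    {x : E} (hk : periodicBump L r (p k) x ≠ 0) : periodicBump L r (p l) x = 0 := by
  by_contra hl
  have := dist_triangle_left (p k : E ⧸ L) (p l) x
  linarith [hsep hkl, dist_lt_of_periodicBump_ne_zero hr hk, dist_lt_of_periodicBump_ne_zero hr hl]

variable [Fintype ι]

lemma card_periodicBump_ne_zero_le_one (hr : 0 < r)
    (hsep : Pairwise fun k l => 2 * r ≤ dist (p k : E ⧸ L) (p l)) (x : E) :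
    (Finset.univ.filter fun k => periodicBump L r (p k) x ≠ 0).card ≤ 1 := by
  refine Finset.card_le_one.2 fun k hk l hl => ?_
  by_contra hkl
  exact (Finset.mem_filter.1 hl).2
    (periodicBump_eq_zero_of_ne hr hsep hkl (Finset.mem_filter.1 hk).2)

end Bump

section Stage

variable {E : Type*} [NormedAddCommGroup E] {L : AddSubgroup E} {r : ℝ} {ι : Type*} [Fintype ι]
  {p : ι → E}

lemma sum_periodicBump_le_one (hr : 0 < r)
    (hsep : Pairwise fun k l => 2 * r ≤ dist (p k : E ⧸ L) (p l)) (x : E) :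
    ∑ k, periodicBump L r (p k) x ≤ 1 := by
  classical
  calc ∑ k, periodicBump L r (p k) x
      _ = ∑ k ∈ Finset.univ.filter fun k => periodicBump L r (p k) x ≠ 0,
          periodicBump L r (p k) x := (Finset.sum_filter_ne_zero _).symm
      _ ≤ (Finset.univ.filter fun k => periodicBump L r (p k) x ≠ 0).card • 1 :=
        Finset.sum_le_card_nsmul _ _ _ fun k _ => periodicBump_le_one hr.le _ _
      _ ≤ 1 := by simpa using card_periodicBump_ne_zero_le_one hr hsep x

/-- At most two bumps are nonzero at `x` or at `y`. -/
lemma sum_abs_periodicBump_sub_le (hr : 0 < r)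
    (hsep : Pairwise fun k l => 2 * r ≤ dist (p k : E ⧸ L) (p l)) (x y : E) :
    ∑ k, |periodicBump L r (p k) x - periodicBump L r (p k) y| ≤ 2 * (dist x y / r) := by
  classical
  set S : E → Finset ι := fun z => Finset.univ.filter fun k => periodicBump L r (p k) z ≠ 0
  have hcard : ((S x ∪ S y).card : ℝ) ≤ 2 := by
    exact_mod_cast (Finset.card_union_le _ _).trans
      (add_le_add (card_periodicBump_ne_zero_le_one hr hsep x)
        (card_periodicBump_ne_zero_le_one hr hsep y))
  calc ∑ k, |periodicBump L r (p k) x - periodicBump L r (p k) y|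
      _ = ∑ k ∈ S x ∪ S y, |periodicBump L r (p k) x - periodicBump L r (p k) y| := by
        refine (Finset.sum_subset (Finset.subset_univ _) fun k _ hk => ?_).symm
        simp only [S, Finset.mem_union, Finset.mem_filter, Finset.mem_univ, true_and,
          not_or, not_not] at hk
        rw [hk.1, hk.2, sub_self, abs_zero]
      _ ≤ (S x ∪ S y).card • (dist x y / r) :=
        Finset.sum_le_card_nsmul _ _ _ fun k _ => abs_periodicBump_sub_le hr _ _ _
      _ ≤ 2 * (dist x y / r) := by
        rw [nsmul_eq_mul]; gcongr

theorem exists_homeomorph_stage [NormedSpace ℝ E] [CompleteSpace E] (p v : ι → E) {β : ℝ}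
    (hr : 0 < r) (hβ : 0 ≤ β) (hsep : Pairwise fun k l => 2 * r ≤ dist (p k : E ⧸ L) (p l))
    (hvr : ∀ k, ‖v k‖ ≤ r / 3) (hvβ : ∀ k, ‖v k‖ ≤ β) :
    ∃ u : E ≃ₜ E, IsTranslationEquivariant L u ∧ (∀ k, u (p k) = p k + v k) ∧
      ∀ x, dist (u x) x ≤ β := by
  set φ : ι → E → ℝ := fun k => periodicBump L r (p k)
  set V : E → E := fun x => ∑ k, φ k x • v k
  have hV_lip : LipschitzWith (2 / 3) V := LipschitzWith.of_dist_le_mul fun x y => by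
    calc dist (V x) (V y)
        _ = ‖∑ k, (φ k x - φ k y) • v k‖ := by
          simp only [V, dist_eq_norm, ← Finset.sum_sub_distrib, sub_smul]
        _ ≤ ∑ k, |φ k x - φ k y| * (r / 3) := (norm_sum_le _ _).trans <|
          Finset.sum_le_sum fun k _ => by rw [norm_smul, Real.norm_eq_abs]; gcongr; exact hvr k
        _ ≤ 2 * (dist x y / r) * (r / 3) := by
          rw [← Finset.sum_mul]; gcongr; exact sum_abs_periodicBump_sub_le hr hsep x y
        _ = ((2 / 3 : NNReal) : ℝ) * dist x y := by push_cast; field_simp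
  obtain ⟨u, hu⟩ := hV_lip.exists_homeomorph_add (by norm_num)
  have hφ_self : ∀ k, φ k (p k) = 1 := fun k => periodicBump_self (p k)
  refine ⟨u, fun x w hw => ?_, fun k => ?_, fun x => ?_⟩
  · simp only [hu, V, φ, periodicBump_add_mem _ x hw]
    abel
  · rw [hu, show V (p k) = ∑ l, φ l (p k) • v l from rfl,
      Finset.sum_eq_single k (fun l _ hlk => ?_) (by simp), hφ_self, one_smul]
    have hk : periodicBump L r (p k) (p k) ≠ 0 := by rw [periodicBump_self]; exact one_ne_zero
    simp only [φ, periodicBump_eq_zero_of_ne hr hsep (Ne.symm hlk) hk, zero_smul]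
  · rw [hu, dist_eq_norm, add_sub_cancel_left]
    calc ‖V x‖
        _ ≤ ∑ k, φ k x * β := (norm_sum_le _ _).trans <| Finset.sum_le_sum fun k _ => by
          rw [norm_smul, Real.norm_of_nonneg (periodicBump_nonneg _ _)]
          exact mul_le_mul_of_nonneg_left (hvβ k) (periodicBump_nonneg _ _)
        _ = (∑ k, φ k x) * β := (Finset.sum_mul _ _ _).symm
        _ ≤ β := mul_le_of_le_one_left hβ (sum_periodicBump_le_one hr hsep x)

end Stage

section Segment

variable {E : Type*} [NormedAddCommGroup E] {L : AddSubgroup E} {ι : Type*}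

lemma exists_homeomorph_of_stages (q : ℕ → ι → E) {β : ℝ} (m : ℕ)
    (hstage : ∀ t < m, ∃ u : E ≃ₜ E, IsTranslationEquivariant L u ∧
      (∀ k, u (q t k) = q (t + 1) k) ∧ ∀ x, dist (u x) x ≤ β) :
    ∃ H : E ≃ₜ E, IsTranslationEquivariant L H ∧ (∀ k, H (q 0 k) = q m k) ∧
      ∀ x, dist (H x) x ≤ m * β := by
  induction m with
  | zero => exact ⟨Homeomorph.refl E, fun _ _ _ => rfl, fun _ => rfl, fun x => by simp⟩
  | succ m ih =>
    obtain ⟨H, hH, hHq, hHd⟩ := ih fun t ht => hstage t (by omega)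
    obtain ⟨u, hu, huq, hud⟩ := hstage m (by omega)
    refine ⟨H.trans u, hu.comp hH, fun k => by simp [hHq, huq], fun x => ?_⟩
    calc dist (u (H x)) x
        _ ≤ dist (u (H x)) (H x) + dist (H x) x := dist_triangle _ _ _
        _ ≤ β + m * β := add_le_add (hud _) (hHd x)
        _ = (m + 1 : ℕ) * β := by push_cast; ring

variable [NormedSpace ℝ E]

lemma isCompact_segment (x y : E) : IsCompact (segment ℝ x y) := by
  rw [segment_eq_image_lineMap]
  exact isCompact_Icc.image AffineMap.lineMap_continuous

lemma exists_pos_le_infDist_segment [Finite ι] (hL : IsClosed (L : Set E)) (a b : ι → E)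
    (hfree : Pairwise fun k l => Disjoint (segment ℝ (a k - a l) (b k - b l)) (L : Set E)) :
    ∃ ρ > 0, ∀ k l, k ≠ l → ∀ x ∈ segment ℝ (a k - a l) (b k - b l), ρ ≤ infDist x L := by
  set K := ⋃ kl : {kl : ι × ι // kl.1 ≠ kl.2},
    segment ℝ (a kl.1.1 - a kl.1.2) (b kl.1.1 - b kl.1.2)
  have hK : IsCompact K := isCompact_iUnion fun _ => isCompact_segment _ _
  obtain ⟨ρ, hρ, hle⟩ := hK.exists_forall_le' (continuous_infDist_pt _).continuousOn
    (a := 0) fun x hx => by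
      obtain ⟨⟨_, hkl⟩, hx⟩ := mem_iUnion.1 hx
      exact (hL.notMem_iff_infDist_pos ⟨0, L.zero_mem⟩).1 ((hfree hkl).notMem_of_mem_left hx)
  exact ⟨ρ, hρ, fun k l hkl x hx => hle x (mem_iUnion.2 ⟨⟨(k, l), hkl⟩, hx⟩)⟩

lemma exists_homeomorph_lineMap_step [CompleteSpace E] [Fintype ι] {a b : ι → E} {ρ : ℝ}
    (hρ : 0 < ρ)
    (hsep : ∀ k l, k ≠ l → ∀ x ∈ segment ℝ (a k - a l) (b k - b l), ρ ≤ infDist x L)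
    {s s' β : ℝ} (hs : s ∈ Icc (0 : ℝ) 1) (hβ : 0 ≤ β) (hβρ : β ≤ ρ / 6)
    (hstep : ∀ k, ‖(s' - s) • (b k - a k)‖ ≤ β) :
    ∃ u : E ≃ₜ E, IsTranslationEquivariant L u ∧
      (∀ k, u (AffineMap.lineMap (a k) (b k) s) = AffineMap.lineMap (a k) (b k) s') ∧
      ∀ x, dist (u x) x ≤ β := by
  obtain ⟨u, hu, hup, hud⟩ := exists_homeomorph_stage (L := L)
    (fun k => AffineMap.lineMap (a k) (b k) s) (fun k => (s' - s) • (b k - a k)) (half_pos hρ) hβ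
    (fun k l hkl => by
      dsimp only
      rw [mul_div_cancel₀ _ two_ne_zero, QuotientAddGroup.dist_mk_eq_infDist]
      refine hsep k l hkl _ ?_
      have := AffineMap.lineMap_vsub_lineMap (a k) (b k) (a l) (b l) s
      simp only [vsub_eq_sub] at this
      rw [this, segment_eq_image_lineMap]
      exact mem_image_of_mem _ hs)
    (fun k => by linarith [hstep k]) hstep
  refine ⟨u, hu, fun k => ?_, hud⟩
  rw [hup, AffineMap.lineMap_apply_module, AffineMap.lineMap_apply_module]
  module

/-- The motion along the segments is split into stages that are short compared with the minimal
separation of the moving points modulo `L`. -/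
theorem exists_homeomorph_segment [CompleteSpace E] [Fintype ι] (hL : IsClosed (L : Set E))
    {a b : ι → E} {β : ℝ} (hβ : 0 ≤ β) (hab : ∀ k, ‖b k - a k‖ ≤ β)
    (hfree : Pairwise fun k l => Disjoint (segment ℝ (a k - a l) (b k - b l)) (L : Set E)) :
    ∃ H : E ≃ₜ E, IsTranslationEquivariant L H ∧ (∀ k, H (a k) = b k) ∧
      ∀ x, dist (H x) x ≤ β := by
  obtain ⟨ρ, hρ, hsep⟩ := exists_pos_le_infDist_segment hL a b hfree
  obtain ⟨m, hm⟩ := exists_nat_gt (6 * β / ρ)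
  have hm0 : (0 : ℝ) < m := (div_nonneg (by positivity) hρ.le).trans_lt hm
  have hβm : β / m ≤ ρ / 6 := by
    rw [div_lt_iff₀ hρ] at hm
    rw [div_le_iff₀ hm0]
    nlinarith
  obtain ⟨H, hH, hHq, hHd⟩ := exists_homeomorph_of_stages
    (fun t k => AffineMap.lineMap (a k) (b k) ((t : ℝ) / m)) m fun t ht =>
      exists_homeomorph_lineMap_step hρ hsep
        ⟨by positivity, (div_le_one hm0).2 (by exact_mod_cast ht.le)⟩ (by positivity) hβm
        fun k => by
          rw [norm_smul, Nat.cast_succ, ← sub_div, add_sub_cancel_left, norm_div, norm_one,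
            Real.norm_natCast, one_div_mul_eq_div]
          gcongr
          exact hab k
  refine ⟨H, hH, fun k => ?_, fun x => (hHd x).trans_eq (by field_simp)⟩
  simpa [hm0.ne'] using hHq k

end Segment

section Generic

variable {E : Type*} [NormedAddCommGroup E] [NormedSpace ℝ E]

lemma affineSpan_pair_ne_top (hE : 2 ≤ Module.finrank ℝ E) (x y : E) : line[ℝ, x, y] ≠ ⊤ := by
  intro h
  have h1 : Module.finrank ℝ (vectorSpan ℝ {x, y}) ≤ 1 := by
    rw [vectorSpan_pair]
    exact (finrank_span_le_card ({x -ᵥ y} : Set E)).trans (by simp)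
  rw [← direction_affineSpan, h, AffineSubspace.direction_top, finrank_top] at h1
  omega

variable [MeasurableSpace E] [BorelSpace E] [FiniteDimensional ℝ E] {ι : Type*} [Fintype ι]

lemma exists_forall_mem_sub_notMem (μ : Measure E) [μ.IsAddHaarMeasure] {U : ι → Set E}
    (hU : ∀ k, IsOpen (U k)) (hU' : ∀ k, (U k).Nonempty) {N : ι → ι → Set E}
    (hN : Pairwise fun k l => μ (N k l) = 0) :
    ∃ z : ι → E, (∀ k, z k ∈ U k) ∧ Pairwise fun k l => z k - z l ∉ N k l := by
  classical
  suffices ∀ s : Finset ι, ∃ z : ι → E, (∀ k, z k ∈ U k) ∧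
      ∀ k ∈ s, ∀ l ∈ s, k ≠ l → z k - z l ∉ N k l by
    obtain ⟨z, hzU, hz⟩ := this Finset.univ
    exact ⟨z, hzU, fun k l hkl => hz k (Finset.mem_univ _) l (Finset.mem_univ _) hkl⟩
  intro s
  induction s using Finset.induction_on with
  | empty => exact ⟨fun k => (hU' k).some, fun k => (hU' k).some_mem, by simp⟩
  | insert i s hi ih =>
    obtain ⟨z, hzU, hz⟩ := ih
    set B := ⋃ l ∈ s, z l +ᵥ (N i l ∪ -N l i)
    have hB : μ B = 0 := (measure_biUnion_null_iff s.countable_toSet).2 fun l hl => by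
      have hil : i ≠ l := fun h => hi (h ▸ hl)
      rw [measure_vadd, measure_union_null_iff, Measure.measure_neg]
      exact ⟨hN hil, hN hil.symm⟩
    obtain ⟨y, hyU, hyB⟩ : (U i \ B).Nonempty := nonempty_of_measure_ne_zero <| by
      rw [measure_sdiff_null hB]; exact ((hU i).measure_pos μ (hU' i)).ne'
    have hy : ∀ l ∈ s, y - z l ∉ N i l ∧ z l - y ∉ N l i := fun l hl => by
      have := fun h => hyB (mem_biUnion hl (mem_vadd_set_iff_neg_vadd_mem.2 h))
      simp only [vadd_eq_add, neg_add_eq_sub, mem_union, Set.mem_neg, neg_sub] at this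
      exact not_or.1 this
    refine ⟨Function.update z i y, fun k => ?_, fun k hk l hl hkl => ?_⟩
    · rcases eq_or_ne k i with rfl | hki
      · simpa using hyU
      · simpa [hki] using hzU k
    rcases Finset.mem_insert.1 hk with rfl | hks <;> rcases Finset.mem_insert.1 hl with rfl | hls
    · exact absurd rfl hkl
    · simpa [Ne.symm hkl] using (hy l hls).1
    · simpa [hkl] using (hy k hks).2
    · have hki : k ≠ i := fun h => hi (h ▸ hks)
      have hli : l ≠ i := fun h => hi (h ▸ hls)
      simpa [hki, hli] using hz k hks l hls hkl

/-- A segment from `d ∉ L` meets `L` only if its other end lies on one of the countably many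
lines through `d` and a point of `L`. -/
lemma measure_setOf_not_disjoint_segment (μ : Measure E) [μ.IsAddHaarMeasure]
    (hE : 2 ≤ Module.finrank ℝ E) {L : AddSubgroup E} (hLc : (L : Set E).Countable) {d : E}
    (hd : d ∉ L) : μ {e | ¬Disjoint (segment ℝ d e) (L : Set E)} = 0 := by
  refine measure_mono_null (t := ⋃ v ∈ (L : Set E), (line[ℝ, d, v] : Set E)) (fun e he => ?_)
    ((measure_biUnion_null_iff hLc).2 fun v _ =>
      Measure.addHaar_affineSubspace μ _ (affineSpan_pair_ne_top hE d v))
  obtain ⟨v, hv, hvL⟩ := not_disjoint_iff.1 he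
  rw [segment_eq_image_lineMap] at hv
  obtain ⟨t, -, rfl⟩ := hv
  have ht : t ≠ 0 := by rintro rfl; exact hd (by simpa using hvL)
  have he : AffineMap.lineMap d (AffineMap.lineMap d e t) t⁻¹ = e := by
    simp only [AffineMap.lineMap_apply_module]
    match_scalars <;> field_simp
    ring
  have hline := AffineMap.lineMap_mem_affineSpan_pair t⁻¹ d (AffineMap.lineMap d e t)
  rw [he] at hline
  exact mem_biUnion hvL hline

variable {L : AddSubgroup E}

lemma exists_midpoints_disjoint_segment (hE : 2 ≤ Module.finrank ℝ E)
    (hLc : (L : Set E).Countable) {a b : ι → E} (ha : Pairwise fun k l => a k - a l ∉ L)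
    (hb : Pairwise fun k l => b k - b l ∉ L) {δ : ℝ} (hδ : 0 < δ) :
    ∃ m : ι → E, (∀ k, dist (m k) (midpoint ℝ (a k) (b k)) < δ) ∧
      (Pairwise fun k l => Disjoint (segment ℝ (a k - a l) (m k - m l)) (L : Set E)) ∧
      Pairwise fun k l => Disjoint (segment ℝ (m k - m l) (b k - b l)) (L : Set E) := by
  obtain ⟨m, hm, hmN⟩ := exists_forall_mem_sub_notMem Measure.addHaar
    (U := fun k => ball (midpoint ℝ (a k) (b k)) δ) (fun _ => isOpen_ball)
    (fun _ => nonempty_ball.2 hδ)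
    (N := fun k l => {e | ¬Disjoint (segment ℝ (a k - a l) e) (L : Set E)} ∪
      {e | ¬Disjoint (segment ℝ (b k - b l) e) (L : Set E)})
    fun k l hkl => measure_union_null (measure_setOf_not_disjoint_segment _ hE hLc (ha hkl))
      (measure_setOf_not_disjoint_segment _ hE hLc (hb hkl))
  refine ⟨m, hm, fun k l hkl => ?_, fun k l hkl => ?_⟩
  · simpa using (not_or.1 (hmN hkl)).1
  · simpa [segment_symm] using (not_or.1 (hmN hkl)).2

theorem exists_homeomorph_move (hE : 2 ≤ Module.finrank ℝ E) (hLc : (L : Set E).Countable)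
    (hLcl : IsClosed (L : Set E)) {a b : ι → E} (ha : Pairwise fun k l => a k - a l ∉ L)
    (hb : Pairwise fun k l => b k - b l ∉ L) {β γ : ℝ} (hβ : 0 ≤ β) (hγ : 0 < γ)
    (hab : ∀ k, ‖b k - a k‖ ≤ β) :
    ∃ h : E ≃ₜ E, IsTranslationEquivariant L h ∧ (∀ k, h (a k) = b k) ∧
      ∀ x, dist (h x) x ≤ β + γ := by
  obtain ⟨m, hm, ham, hmb⟩ := exists_midpoints_disjoint_segment hE hLc ha hb (half_pos hγ)
  have hhalf : ∀ k, dist (a k) (midpoint ℝ (a k) (b k)) = ‖b k - a k‖ / 2 ∧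
      dist (midpoint ℝ (a k) (b k)) (b k) = ‖b k - a k‖ / 2 := fun k => by
    rw [dist_left_midpoint, dist_midpoint_right, dist_eq_norm']
    constructor <;> norm_num <;> ring
  obtain ⟨H₁, hH₁, hH₁a, hH₁d⟩ := exists_homeomorph_segment (L := L) hLcl
    (a := a) (b := m) (β := β / 2 + γ / 2) (by positivity) (fun k => by
      rw [← dist_eq_norm']
      linarith [dist_triangle (a k) (midpoint ℝ (a k) (b k)) (m k), dist_comm (m k)
        (midpoint ℝ (a k) (b k)), hm k, (hhalf k).1, hab k]) ham
  obtain ⟨H₂, hH₂, hH₂a, hH₂d⟩ := exists_homeomorph_segment (L := L) hLcl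
    (a := m) (b := b) (β := β / 2 + γ / 2) (by positivity) (fun k => by
      rw [← dist_eq_norm']
      linarith [dist_triangle (m k) (midpoint ℝ (a k) (b k)) (b k), hm k, (hhalf k).2, hab k])
    hmb
  refine ⟨H₁.trans H₂, hH₂.comp hH₁, fun k => by simp [hH₁a, hH₂a], fun x => ?_⟩
  show dist (H₂ (H₁ x)) x ≤ β + γ
  linarith [dist_triangle (H₂ (H₁ x)) (H₁ x) x, hH₂d (H₁ x), hH₁d x]

end Generic

lemma isClosed_intLattice : IsClosed (intLattice : Set R2) := by
  have : (intLattice : Set R2) = ⋂ i, (fun v : R2 => v i) ⁻¹' range ((↑) : ℤ → ℝ) := by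
    ext v
    simp only [mem_iInter, mem_preimage, mem_range, eq_comm (b := v _)]
    rfl
  rw [this]
  exact isClosed_iInter fun i =>
    Int.isClosedEmbedding_coe_real.isClosed_range.preimage (by fun_prop)

lemma countable_intLattice : (intLattice : Set R2).Countable := by
  refine (countable_range fun n : Fin 2 → ℤ => WithLp.toLp 2 fun i => (n i : ℝ)).mono
    fun v hv => mem_range.2 ⟨fun i => (hv i).choose, ?_⟩
  ext i
  exact ((hv i).choose_spec).symm

lemma IsTranslationEquivariant.exists_isLift {G : R2 ≃ₜ R2}
    (hG : IsTranslationEquivariant intLattice G) : ∃ g : T2 ≃ₜ T2, IsLift g G :=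
  let ⟨g, hg⟩ := hG.exists_homeomorph_quotient
  ⟨g, fun x => (hg x).symm, hG⟩

lemma inv_smul_mem_rotSet_of_iterate_eq_add {G : R2 ≃ₜ R2}
    (hG : IsTranslationEquivariant intLattice G) {n : ℕ} (hn : n ≠ 0) {z w : R2}
    (hw : w ∈ intLattice) (hz : (⇑G)^[n] z = z + w) : (n : ℝ)⁻¹ • w ∈ rotSet G := by
  refine ⟨fun _ => z, fun k => (k + 1) * n,
    tendsto_atTop_mono (fun k => Nat.le_mul_of_pos_right _ (Nat.pos_of_ne_zero hn))
      (tendsto_add_atTop_nat 1), tendsto_const_nhds.congr fun k => ?_⟩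
  rw [hG.iterate_mul_eq_add_nsmul hw hz, add_sub_cancel_left, ← Nat.cast_smul_eq_nsmul ℝ,
    smul_smul]
  congr 1
  push_cast
  field_simp

lemma exists_lt_forall_le_of_forall_lt {f : ℕ → ℝ} {n : ℕ} {ε : ℝ} (h : ∀ t < n, f t < ε) :
    ∃ c < ε, ∀ t < n, f t ≤ c := by
  induction n with
  | zero => exact ⟨ε - 1, by linarith, fun t ht => absurd ht (Nat.not_lt_zero t)⟩
  | succ n ih =>
    obtain ⟨c, hcε, hc⟩ := ih fun t ht => h t (by omega)
    refine ⟨max c (f n), max_lt hcε (h n (by omega)), fun t ht => ?_⟩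
    rcases (Nat.lt_succ_iff.1 ht).lt_or_eq with ht | rfl
    · exact (hc t ht).trans (le_max_left _ _)
    · exact le_max_right _ _

lemma Function.iterate_apply_eq_of_forall_lt {α : Type*} {G : α → α} {p : ℕ → α} {n : ℕ}
    (h : ∀ t < n, G (p t) = p (t + 1)) : G^[n] (p 0) = p n := by
  induction n with
  | zero => rfl
  | succ n ih => rw [Function.iterate_succ_apply', ih fun t ht => h t (by omega), h n (by omega)]

lemma sub_succ_notMem_of_eq_add {E : Type*} [AddCommGroup E] {L : AddSubgroup E} {p : ℕ → E}
    {n : ℕ} {w : E} (hw : w ∈ L) (hpn : p n = p 0 + w)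
    (hp : ∀ k < n, ∀ l < n, k ≠ l → p k - p l ∉ L) {k l : ℕ} (hk : k < n) (hl : l < n)
    (hkl : k ≠ l) : p (k + 1) - p (l + 1) ∉ L := by
  have hpn' : ∀ l < n, 0 < l → p n - p l ∉ L := fun l hl hl0 hmem => by
    refine hp 0 (by omega) l hl hl0.ne ?_
    simpa [hpn, add_sub_right_comm] using L.sub_mem hmem hw
  rcases (show k + 1 ≤ n from hk).lt_or_eq with hk' | hk' <;>
    rcases (show l + 1 ≤ n from hl).lt_or_eq with hl' | hl'
  · exact hp _ hk' _ hl' (by omega)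
  · rw [hl']; exact fun h => hpn' _ hk' (by omega) (by simpa using L.neg_mem h)
  · rw [hk']; exact hpn' _ hl' (by omega)
  · omega

lemma exists_near_points_distinct_mod_intLattice {F : R2 ≃ₜ R2} {n : ℕ} (hn : 0 < n)
    (y : ℕ → R2) (w : R2) {δ : ℝ} (hδ : 0 < δ) :
    ∃ p : ℕ → R2, p n = p 0 + w ∧ (∀ t < n, dist (p t) (y t) < δ) ∧
      (∀ t < n, dist (F (p t)) (F (y t)) < δ) ∧
      ∀ k < n, ∀ l < n, k ≠ l → p k - p l ∉ intLattice := by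
  obtain ⟨ζ, hζU, hζ⟩ := exists_forall_mem_sub_notMem volume
    (U := fun t : Fin n => ball (y t) δ ∩ F ⁻¹' ball (F (y t)) δ)
    (fun _ => isOpen_ball.inter (isOpen_ball.preimage F.continuous))
    (fun t => ⟨y t, mem_ball_self hδ, mem_preimage.2 (mem_ball_self hδ)⟩)
    (N := fun _ _ => intLattice) fun _ _ _ => countable_intLattice.measure_zero volume
  set p : ℕ → R2 := fun t => if h : t < n then ζ ⟨t, h⟩ else ζ ⟨0, hn⟩ + w
  have hp : ∀ t (h : t < n), p t = ζ ⟨t, h⟩ := fun t h => dif_pos h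
  refine ⟨p, by simp [p, hn], fun t ht => ?_, fun t ht => ?_, fun k hk l hl hkl => ?_⟩
  · rw [hp t ht]; exact (hζU ⟨t, ht⟩).1
  · rw [hp t ht]; exact (hζU ⟨t, ht⟩).2
  · rw [hp k hk, hp l hl]; exact hζ (Fin.ne_of_val_ne hkl)

theorem exists_perturbation_iterate_eq_add {F : R2 ≃ₜ R2}
    (hF : IsTranslationEquivariant intLattice F) {n : ℕ} (hn : 0 < n) {y : ℕ → R2} {w : R2}
    {ε₁ ε₂ : ℝ} (hjump : ∀ t < n, dist (F (y t)) (y (t + 1)) < ε₁)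
    (hclose : ‖y n - y 0 - w‖ < ε₂) (hw : w ∈ intLattice) :
    ∃ G : R2 ≃ₜ R2, IsTranslationEquivariant intLattice G ∧ supDist F G < ε₁ + ε₂ ∧
      ∃ z, (⇑G)^[n] z = z + w := by
  obtain ⟨c, hcε, hc⟩ := exists_lt_forall_le_of_forall_lt hjump
  set e := ‖y n - y 0 - w‖
  set δ := (ε₁ + ε₂ - (c + e)) / 4
  have hδ : 0 < δ := by simp only [δ]; linarith
  obtain ⟨p, hpn, hpy, hFpy, hp⟩ := exists_near_points_distinct_mod_intLattice (F := F) hn y w hδ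
  have hpy' : ∀ t ≤ n, dist (p t) (y t) < δ + e := fun t ht => by
    rcases ht.lt_or_eq with ht | rfl
    · linarith [hpy t ht, norm_nonneg (y n - y 0 - w)]
    calc dist (p t) (y t)
        _ = ‖(p 0 - y 0) - (y t - y 0 - w)‖ := by rw [hpn, dist_eq_norm]; congr 1; abel
        _ ≤ ‖p 0 - y 0‖ + e := norm_sub_le _ _
        _ < δ + e := by rw [← dist_eq_norm]; linarith [hpy 0 hn]
  have hab : ∀ k < n, ‖p (k + 1) - F (p k)‖ ≤ c + e + 2 * δ := fun k hk => by
    rw [← dist_eq_norm']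
    linarith [dist_triangle4 (F (p k)) (F (y k)) (y (k + 1)) (p (k + 1)), hFpy k hk, hc k hk,
      hpy' (k + 1) hk, dist_comm (p (k + 1)) (y (k + 1))]
  obtain ⟨h, hh, hhp, hhd⟩ := exists_homeomorph_move (by simp) countable_intLattice
    isClosed_intLattice (ι := Fin n) (a := fun k => F (p k)) (b := fun k => p (k + 1))
    (fun k l hkl => hF.sub_notMem F.injective (hp k k.2 l l.2 (Fin.val_ne_of_ne hkl)))
    (fun k l hkl => sub_succ_notMem_of_eq_add hw hpn hp k.2 l.2 (Fin.val_ne_of_ne hkl))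
    ((norm_nonneg _).trans (hab 0 hn)) hδ fun k => hab k k.2
  refine ⟨F.trans h, hh.comp hF, ?_, p 0, ?_⟩
  · refine (ciSup_le fun x => ?_).trans_lt (show c + e + 2 * δ + δ < ε₁ + ε₂ by
      simp only [δ]; linarith)
    rw [dist_comm]
    exact hhd (F x)
  · rw [Function.iterate_apply_eq_of_forall_lt fun t ht => hhp ⟨t, ht⟩, hpn]

theorem pseudo_orbit_return_vector_in_rotSet_general (f : T2 ≃ₜ T2)
    (ε : ℝ)
    (F : R2 ≃ₜ R2) (hF : IsLift f F) (hstab : UpperStable Homeo0 F ε)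
    (x : ℕ → R2) (hx : IsPseudoOrbit (⇑F) (ε / 2) x)
    (i j : ℕ) (hij : i < j) (w : R2) (hw : w ∈ intLattice)
    (hclose : ‖x j - x i - w‖ < ε / 2) :
    ((j : ℝ) - (i : ℝ))⁻¹ • w ∈ rotSet F ∧
    ∃ v ∈ rotSet F, ∃ η : R2, ‖η‖ < ε / 2 ∧
      x j - x i = ((j : ℝ) - (i : ℝ)) • v + η := by
  have hji : (j : ℝ) - i = (j - i : ℕ) := by rw [Nat.cast_sub hij.le]
  obtain ⟨G, hG, hGF, z, hz⟩ := exists_perturbation_iterate_eq_add hF.equivariant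
    (Nat.sub_pos_of_lt hij) (y := fun t => x (i + t)) (fun t _ => hx (i + t))
    (by rwa [Nat.add_sub_cancel' hij.le]) hw
  obtain ⟨g, hg⟩ := hG.exists_isLift
  have hv : ((j : ℝ) - i)⁻¹ • w ∈ rotSet F := hstab g ⟨G, hg⟩ G hg (by rwa [add_halves] at hGF)
    (hji ▸ inv_smul_mem_rotSet_of_iterate_eq_add hG (by omega) hw hz)
  refine ⟨hv, _, hv, x j - x i - w, hclose, ?_⟩
  rw [smul_inv_smul₀ (by rw [hji]; exact_mod_cast (Nat.sub_pos_of_lt hij).ne')]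
  abel

/-- Let `f ∈ Homeo₀(T²)` have an `ε`-upper-stable rotation set with
`0 < ε < 1`, `F` a lift of `f`, and `(x̃_i)` an `(ε/2)`-pseudo-orbit of `F`. If
`i < j` and `w ∈ ℤ²` with `‖x̃_j − x̃_i − w‖ < ε/2`, then `w/(j−i) ∈ ρ(F)`; in
particular `x̃_j − x̃_i = (j−i)v + η` with `v ∈ ρ(F)` and `‖η‖ < ε/2`. -/
theorem pseudo_orbit_return_vector_in_rotSet (f : T2 ≃ₜ T2) (hf : f ∈ Homeo0)
    (ε : ℝ) (hε0 : 0 < ε) (hε1 : ε < 1)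
    (F : R2 ≃ₜ R2) (hF : IsLift f F) (hstab : UpperStable Homeo0 F ε)
    (x : ℕ → R2) (hx : IsPseudoOrbit (⇑F) (ε / 2) x)
    (i j : ℕ) (hij : i < j) (w : R2) (hw : w ∈ intLattice)
    (hclose : ‖x j - x i - w‖ < ε / 2) :
    ((j : ℝ) - (i : ℝ))⁻¹ • w ∈ rotSet F ∧
    ∃ v ∈ rotSet F, ∃ η : R2, ‖η‖ < ε / 2 ∧
      x j - x i = ((j : ℝ) - (i : ℝ)) • v + η :=
  pseudo_orbit_return_vector_in_rotSet_general f ε F hF hstab x hx i j hij w hw hclose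
end
end
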